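/- Let S₁, S₂ be independent exponential random variables with rate μ > 0, and τ an independent exponential random variable with rate (2r-1)μ where r ≥ 2 is an integer. Then E[max(S₁, S₂ + τ)] = 1/μ + ((2r-1)/(2r-2))·(1/(2μ)) − 1/((2r-2)(2r-1)·2rμ). -/

import Mathlib

/-!
Integrate out one variable at a time. For `τ ∼ Exp(a)` one has
`𝔼[max(s, t + τ)] = max(s, t) + exp(-a (s - t)⁺) / a`; averaging this over `t ∼ Exp(μ)` and then
the result over `s ∼ Exp(μ)` only requires splitting each half-line where the maximum switches
branch, after which every piece is an integral of `(p + q x) exp(k x)`.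
-/

open Real MeasureTheory Set Filter Topology Asymptotics

section LinearMulExp

variable {k : ℝ}

theorem hasDerivAt_linear_mul_exp (p q : ℝ) (hk : k ≠ 0) (x : ℝ) :
    HasDerivAt (fun x => (p / k - q / k ^ 2 + q / k * x) * exp (k * x))
      ((p + q * x) * exp (k * x)) x := by
  have h := (((hasDerivAt_id x).const_mul (q / k)).const_add (p / k - q / k ^ 2)).mul
    ((hasDerivAt_id x).const_mul k).exp
  refine h.congr_deriv ?_
  simp only [id, mul_one]
  field_simp
  ring

theorem tendsto_linear_mul_exp_atTop (p q : ℝ) (hk : k < 0) :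
    Tendsto (fun x => (p + q * x) * exp (k * x)) atTop (𝓝 0) := by
  have hexp : Tendsto (fun x => exp (k * x)) atTop (𝓝 0) :=
    tendsto_exp_atBot.comp (tendsto_id.const_mul_atTop_of_neg hk)
  have hlin : Tendsto (fun x => x ^ (1 : ℝ) * exp (-(-k) * x)) atTop (𝓝 0) :=
    tendsto_rpow_mul_exp_neg_mul_atTop_nhds_zero 1 (-k) (by linarith)
  simpa [add_mul, mul_assoc] using (hexp.const_mul p).add (hlin.const_mul q)

theorem integrableOn_Ioi_linear_mul_exp (p q c : ℝ) (hk : k < 0) :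
    IntegrableOn (fun x => (p + q * x) * exp (k * x)) (Ioi c) := by
  refine integrable_of_isBigO_exp_neg (b := -k / 2) (by linarith) (by fun_prop) ?_
  have h := (tendsto_linear_mul_exp_atTop p q (k := k / 2) (by linarith)).isBigO_one ℝ
  refine (h.mul (isBigO_refl (fun x => exp (-(-k / 2) * x)) atTop)).congr' ?_ ?_ <;>
    filter_upwards with x
  · rw [mul_assoc, ← exp_add]
    ring_nf
  · simp

theorem integral_Ioi_linear_mul_exp (p q c : ℝ) (hk : k < 0) :
    ∫ x in Ioi c, (p + q * x) * exp (k * x) = (q / k ^ 2 - (p + q * c) / k) * exp (k * c) := by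
  have hF := tendsto_linear_mul_exp_atTop (p / k - q / k ^ 2) (q / k) hk
  rw [integral_Ioi_of_hasDerivAt_of_tendsto' (fun x _ => hasDerivAt_linear_mul_exp p q hk.ne x)
    (integrableOn_Ioi_linear_mul_exp p q c hk) hF]
  ring

theorem integral_exp_mul (hk : k ≠ 0) (u v : ℝ) :
    ∫ x in u..v, exp (k * x) = (exp (k * v) - exp (k * u)) / k := by
  rw [intervalIntegral.integral_comp_mul_left (fun x => exp x) hk, integral_exp, smul_eq_mul,
    inv_mul_eq_div]

end LinearMulExp

/-- `𝔼[max(s, t + τ)]` for `τ ∼ Exp(a)`. -/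
noncomputable def expectMaxShift (a s t : ℝ) : ℝ := max s t + exp (-a * max (s - t) 0) / a

/-- `𝔼[max(s, S + τ)]` for independent `S ∼ Exp(μ)` and `τ ∼ Exp(a)`, when `0 ≤ s`. -/
noncomputable def expectMaxHypoexp (μ a s : ℝ) : ℝ :=
  s + (1 / μ + 1 / a) * exp (-μ * s) + μ / (a * (a - μ)) * (exp (-μ * s) - exp (-a * s))

section ExpectedMaximum

variable {μ a : ℝ}

theorem integral_Ioi_max_add_mul_exp (ha : 0 < a) (s t : ℝ) :
    ∫ τ in Ioi 0, max s (t + τ) * (a * exp (-a * τ)) = expectMaxShift a s t := by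
  set d := max (s - t) 0 with hd_def
  have hmax : t + d = max s t := by
    rw [hd_def, add_comm, ← max_add_add_right, sub_add_cancel, zero_add]
  have below : EqOn (fun τ => max s (t + τ) * (a * exp (-a * τ)))
      (fun τ => (max s t * a) * exp (-a * τ)) (uIcc 0 d) := by
    intro τ hτ
    rw [uIcc_of_le (le_max_right _ _)] at hτ
    have : max s (t + τ) = max s t :=
      le_antisymm (max_le (le_max_left _ _) (by linarith [hτ.2]))
        (max_le_max le_rfl (by linarith [hτ.1]))
    simp only [this]
    ring
  have above : EqOn (fun τ => max s (t + τ) * (a * exp (-a * τ)))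
      (fun τ => (a * t + a * τ) * exp (-a * τ)) (Ioi d) := by
    intro τ hτ
    have : max s (t + τ) = t + τ := max_eq_right (by linarith [le_max_left s t, mem_Ioi.mp hτ])
    simp only [this]
    ring
  have hk : -a < 0 := neg_lt_zero.mpr ha
  rw [← intervalIntegral.integral_interval_add_Ioi'
      ((by fun_prop : Continuous fun τ => max s (t + τ) * (a * exp (-a * τ))).intervalIntegrable
        0 d)
      ((integrableOn_Ioi_linear_mul_exp (a * t) a d hk).congr_fun above.symm measurableSet_Ioi),
    intervalIntegral.integral_congr below, setIntegral_congr_fun measurableSet_Ioi above,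
    intervalIntegral.integral_const_mul, integral_exp_mul hk.ne,
    integral_Ioi_linear_mul_exp _ _ _ hk, expectMaxShift, ← hd_def, ← hmax, mul_zero, exp_zero]
  field_simp
  ring

theorem integral_Ioi_expectMaxShift_mul_exp (hμ : 0 < μ) (ha : 0 < a) (hμa : μ ≠ a) {s : ℝ}
    (hs : 0 ≤ s) :
    ∫ t in Ioi 0, expectMaxShift a s t * (μ * exp (-μ * t)) = expectMaxHypoexp μ a s := by
  have below : EqOn (fun t => expectMaxShift a s t * (μ * exp (-μ * t)))
      (fun t => (s * μ) * exp (-μ * t) + (μ / a * exp (-a * s)) * exp ((a - μ) * t))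
      (uIcc 0 s) := by
    intro t ht
    rw [uIcc_of_le hs] at ht
    have hexp : exp (-a * (s - t)) * exp (-μ * t) = exp (-a * s) * exp ((a - μ) * t) := by
      rw [← exp_add, ← exp_add]
      ring_nf
    simp only [expectMaxShift, max_eq_left ht.2, max_eq_left (sub_nonneg.mpr ht.2)]
    linear_combination (μ / a) * hexp
  have above : EqOn (fun t => expectMaxShift a s t * (μ * exp (-μ * t)))
      (fun t => (μ / a + μ * t) * exp (-μ * t)) (Ioi s) := by
    intro t ht
    have hst : s ≤ t := le_of_lt ht
    simp only [expectMaxShift, max_eq_right hst, max_eq_right (sub_nonpos.mpr hst), mul_zero,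
      exp_zero]
    ring
  have hk : -μ < 0 := neg_lt_zero.mpr hμ
  have hexp : exp ((a - μ) * s) = exp (-μ * s) / exp (-a * s) := by
    rw [← exp_sub]
    ring_nf
  rw [← intervalIntegral.integral_interval_add_Ioi'
      ((by unfold expectMaxShift; fun_prop : Continuous fun t =>
        expectMaxShift a s t * (μ * exp (-μ * t))).intervalIntegrable 0 s)
      ((integrableOn_Ioi_linear_mul_exp (μ / a) μ s hk).congr_fun above.symm measurableSet_Ioi),
    intervalIntegral.integral_congr below, setIntegral_congr_fun measurableSet_Ioi above,
    intervalIntegral.integral_add ((by fun_prop : Continuous _).intervalIntegrable 0 s)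
      ((by fun_prop : Continuous _).intervalIntegrable 0 s),
    intervalIntegral.integral_const_mul, intervalIntegral.integral_const_mul,
    integral_exp_mul hk.ne, integral_exp_mul (sub_ne_zero.mpr hμa.symm),
    integral_Ioi_linear_mul_exp _ _ _ hk, expectMaxHypoexp, hexp]
  simp only [mul_zero, exp_zero]
  field_simp
  ring

theorem integral_Ioi_expectMaxHypoexp_mul_exp (hμ : 0 < μ) (ha : 0 < a) (hμa : μ ≠ a) :
    ∫ s in Ioi 0, expectMaxHypoexp μ a s * (μ * exp (-μ * s)) =
      3 / (2 * μ) + (a + 2 * μ) / (2 * a * (a + μ)) := by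
  set K := μ / (a * (a - μ)) with hK
  have hsplit : (fun s => expectMaxHypoexp μ a s * (μ * exp (-μ * s))) = fun s =>
      (0 + μ * s) * exp (-μ * s) + ((1 / μ + 1 / a + K) * μ + 0 * s) * exp (-(2 * μ) * s)
        - (K * μ + 0 * s) * exp (-(a + μ) * s) := by
    funext s
    have hμμ : exp (-μ * s) * exp (-μ * s) = exp (-(2 * μ) * s) := by
      rw [← exp_add]
      ring_nf
    have haμ : exp (-a * s) * exp (-μ * s) = exp (-(a + μ) * s) := by
      rw [← exp_add]
      ring_nf
    rw [expectMaxHypoexp, ← hμμ, ← haμ]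
    ring
  have hk₁ : -μ < 0 := by linarith
  have hk₂ : -(2 * μ) < 0 := by linarith
  have hk₃ : -(a + μ) < 0 := by linarith
  have h₁ := integrableOn_Ioi_linear_mul_exp 0 μ 0 hk₁
  have h₂ := integrableOn_Ioi_linear_mul_exp ((1 / μ + 1 / a + K) * μ) 0 0 hk₂
  rw [hsplit, integral_sub ?_ (integrableOn_Ioi_linear_mul_exp _ _ _ hk₃),
    integral_add h₁ h₂, integral_Ioi_linear_mul_exp _ _ _ hk₁,
    integral_Ioi_linear_mul_exp _ _ _ hk₂, integral_Ioi_linear_mul_exp _ _ _ hk₃, hK]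
  · have : a - μ ≠ 0 := sub_ne_zero.mpr hμa.symm
    simp only [mul_zero, exp_zero]
    field_simp
    ring
  · exact h₁.add h₂

end ExpectedMaximum

/-- Expected value of max(S₁, S₂+τ) for independent S₁,S₂ ~ Exp(μ), τ ~ Exp((2r-1)μ),
    written as an integral against the joint density. -/
theorem expect_max_service (r : ℕ) (hr : 2 ≤ r) (μ : ℝ) (hμ : 0 < μ) :
    (∫ s₁ in Ioi (0 : ℝ), ∫ s₂ in Ioi (0 : ℝ), ∫ τ in Ioi (0 : ℝ),
        max s₁ (s₂ + τ) * (μ * exp (-μ * s₁)) * (μ * exp (-μ * s₂)) *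
          ((2 * r - 1) * μ * exp (-((2 * r - 1) * μ) * τ))) =
      1 / μ + (2 * (r : ℝ) - 1) / (2 * r - 2) * (1 / (2 * μ))
        - 1 / ((2 * (r : ℝ) - 2) * (2 * r - 1) * (2 * r) * μ) := by
  have hr' : (2 : ℝ) ≤ r := by exact_mod_cast hr
  set a := (2 * (r : ℝ) - 1) * μ with ha_def
  have ha : 0 < a := mul_pos (by linarith) hμ
  have hμa : μ ≠ a := by nlinarith
  calc _ = ∫ s₁ in Ioi 0, expectMaxHypoexp μ a s₁ * (μ * exp (-μ * s₁)) := by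
        refine setIntegral_congr_fun measurableSet_Ioi fun s₁ hs₁ => ?_
        rw [← integral_Ioi_expectMaxShift_mul_exp hμ ha hμa (le_of_lt hs₁), ← integral_mul_const]
        refine setIntegral_congr_fun measurableSet_Ioi fun s₂ _ => ?_
        rw [← integral_Ioi_max_add_mul_exp ha, ← integral_mul_const, ← integral_mul_const]
        congr 1 with τ
        ring
    _ = 3 / (2 * μ) + (a + 2 * μ) / (2 * a * (a + μ)) :=
        integral_Ioi_expectMaxHypoexp_mul_exp hμ ha hμa
    _ = _ := by
        have : (r : ℝ) - 1 ≠ 0 := by linarith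
        have : 2 * (r : ℝ) - 1 ≠ 0 := by linarith
        have : 2 * (r : ℝ) - 2 ≠ 0 := by linarith
        rw [ha_def]
        field_simp
        ring
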